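/- Let a_1,…,a_n, B, K be positive integers with n ≥ 2, K ≥ 2 and ∑ a_i = B·K, and set x = 2·B·K. Let the virtual network be a 2-tiered star with root r; for each i an element group A_i that is a star on a_i vertices (a group center with a_i − 1 leaf children) all of whose internal edges have demand 1, joined to r by a demand-0 edge; and K + B dummy leaves attached to r, each by an edge of demand x. Let the physical network be the uniform 2-tiered star consisting of a root R, K bin subtrees each consisting of a bin root adjacent to R with B leaf children, and B extra leaves adjacent to R, with every edge of cost 1 (so distances are unweighted tree distances). Set θ = (K + B)·x + 2·∑_{i=1}^{n}(a_i − 1). Then the indices {1,…,n} can be partitioned into K subsets each with ∑ a_i at most B if and only if there exists a bijection f from the virtual vertices to the physical vertices whose embedding cost ∑_{uv ∈ E(VN)} w(uv) · dist(f(u), f(v)) is at most θ. (This is the correctness of the reduction showing that wVNE of a 2-star virtual network on a uniform 2-star physical network is NP-complete.) -/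

import Mathlib

/-!
The dummy edges carry demand `2BK`, more than the budget `2 ∑ (aᵢ - 1)` left for the groups, so in
an embedding of cost at most `θ` every dummy is adjacent to the image of `r`. Only the physical
root has `K + B` neighbours (a bin root has `B + 1 < K + B` since `K ≥ 2`), so `r ↦ R`, the dummies
fill the first level and the groups fill the `K·B` bin leaves. Distinct bin leaves are at distance
`2` within a bin and `4` across bins, so the remaining budget forces every group into one bin:
this is a packing. Conversely, a packing fills every bin exactly (as `∑ aᵢ = BK`), and laying the
groups of each bin consecutively onto its leaves gives an embedding of cost exactly `θ`.
-/

open Classical Finset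

/-- Tree distance in the uniform 2-tiered star physical network of Statement 5:
the root `R` is `(0,0)`; a first-level vertex (a bin root, or an extra leaf of the
root) is `(k, 0)` with `k ≥ 1`; a bin leaf is `(k, b)` with `k, b ≥ 1`.  All edges
have cost `1`, so the distance is the unweighted tree distance. -/
def uniformTwoStarDist (u v : ℕ × ℕ) : ℕ :=
  if u = v then 0
  else if u.1 = v.1 ∧ u.1 ≠ 0 then (if u.2 = 0 ∨ v.2 = 0 then 1 else 2)
  else (if u.1 = 0 then 0 else if u.2 = 0 then 1 else 2) +
       (if v.1 = 0 then 0 else if v.2 = 0 then 1 else 2)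

lemma Finset.eq_of_forall_le_of_sum_le {ι M : Type*} [AddCommMonoid M] [PartialOrder M]
    [IsOrderedCancelAddMonoid M] {s : Finset ι} {f g : ι → M} (hle : ∀ i ∈ s, f i ≤ g i)
    (hsum : ∑ i ∈ s, g i ≤ ∑ i ∈ s, f i) : ∀ i ∈ s, f i = g i :=
  (sum_eq_sum_iff_of_le hle).1 (le_antisymm (sum_le_sum hle) hsum)

lemma Set.BijOn.union_of_disjoint {α β : Type*} {f : α → β} {s₁ s₂ : Set α} {t₁ t₂ : Set β}
    (h₁ : BijOn f s₁ t₁) (h₂ : BijOn f s₂ t₂) (ht : Disjoint t₁ t₂) :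
    BijOn f (s₁ ∪ s₂) (t₁ ∪ t₂) := by
  have hs : Disjoint s₁ s₂ := Set.disjoint_left.2 fun x hx₁ hx₂ ↦
    Set.disjoint_left.1 ht (h₁.mapsTo hx₁) (h₂.mapsTo hx₂)
  refine h₁.union h₂ ((injOn_union hs).2 ⟨h₁.injOn, h₂.injOn, fun x hx y hy hxy ↦ ?_⟩)
  exact Set.disjoint_left.1 ht (h₁.mapsTo hx) (hxy ▸ h₂.mapsTo hy)

lemma Finset.sum_filter_lt_add_eq_sum_filter_le {ι : Type*} [LinearOrder ι] {s : Finset ι}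
    (a : ι → ℕ) {i : ι} (hi : i ∈ s) :
    ∑ x ∈ s.filter (· < i), a x + a i = ∑ x ∈ s.filter (· ≤ i), a x := by
  have : s.filter (· ≤ i) = insert i (s.filter (· < i)) := by
    ext x
    simp only [mem_filter, mem_insert, le_iff_lt_or_eq]
    grind
  rw [this, sum_insert (by simp), add_comm]

lemma Finset.sum_filter_lt_add_le_sum_filter_lt {ι : Type*} [LinearOrder ι] {s : Finset ι}
    (a : ι → ℕ) {i i' : ι} (hi : i ∈ s) (hii' : i < i') :
    ∑ x ∈ s.filter (· < i), a x + a i ≤ ∑ x ∈ s.filter (· < i'), a x := by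
  rw [sum_filter_lt_add_eq_sum_filter_le a hi]
  refine sum_le_sum_of_subset fun x hx ↦ ?_
  simp only [mem_filter] at hx ⊢
  exact ⟨hx.1, hx.2.trans_lt hii'⟩

lemma Finset.sum_filter_lt_add_le_sum {ι : Type*} [LinearOrder ι] {s : Finset ι}
    (a : ι → ℕ) {i : ι} (hi : i ∈ s) : ∑ x ∈ s.filter (· < i), a x + a i ≤ ∑ x ∈ s, a x := by
  rw [sum_filter_lt_add_eq_sum_filter_le a hi]
  exact sum_le_sum_of_subset (filter_subset _ _)

/-- Vertex `(0, 0)` is the root `r`, group `i` has center `(i, 0)` and leaves `(i, j)` for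
`1 ≤ j ≤ a i - 1`, and dummy leaf `l` is `(n + l, 0)`. -/
def virtualVertices (n K B : ℕ) (a : ℕ → ℕ) : Set (ℕ × ℕ) :=
  {((0 : ℕ), (0 : ℕ))} ∪
    {p : ℕ × ℕ | 1 ≤ p.1 ∧ p.1 ≤ n ∧ p.2 ≤ a p.1 - 1} ∪
    {p : ℕ × ℕ | n + 1 ≤ p.1 ∧ p.1 ≤ n + K + B ∧ p.2 = 0}

def physicalVertices (K B : ℕ) : Set (ℕ × ℕ) :=
  {((0 : ℕ), (0 : ℕ))} ∪
    {p : ℕ × ℕ | 1 ≤ p.1 ∧ p.1 ≤ K + B ∧ p.2 = 0} ∪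
    {p : ℕ × ℕ | 1 ≤ p.1 ∧ p.1 ≤ K ∧ 1 ≤ p.2 ∧ p.2 ≤ B}

def groupVertices (a : ℕ → ℕ) (s : Finset ℕ) : Finset (ℕ × ℕ) :=
  s.biUnion fun i => {i} ×ˢ range (a i)

def dummyVertices (n K B : ℕ) : Finset (ℕ × ℕ) := Icc (n + 1) (n + K + B) ×ˢ {0}

def firstLevel (K B : ℕ) : Finset (ℕ × ℕ) := Icc 1 (K + B) ×ˢ {0}

def binLeaves (K B : ℕ) : Finset (ℕ × ℕ) := Icc 1 K ×ˢ Icc 1 B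

def dummyCost (n K B : ℕ) (f : ℕ × ℕ → ℕ × ℕ) : ℕ :=
  ∑ l ∈ Icc 1 (K + B), 2 * B * K * uniformTwoStarDist (f (0, 0)) (f (n + l, 0))

def groupCost (n : ℕ) (a : ℕ → ℕ) (f : ℕ × ℕ → ℕ × ℕ) : ℕ :=
  ∑ i ∈ Icc 1 n, ∑ j ∈ Icc 1 (a i - 1), uniformTwoStarDist (f (i, 0)) (f (i, j))

def IsBinPacking (n B K : ℕ) (a g : ℕ → ℕ) : Prop :=
  (∀ i ∈ Icc 1 n, g i ∈ Icc 1 K) ∧ ∀ k ∈ Icc 1 K, ∑ i ∈ (Icc 1 n).filter (fun i => g i = k), a i ≤ B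

lemma mem_groupVertices {a : ℕ → ℕ} {s : Finset ℕ} {p : ℕ × ℕ} :
    p ∈ groupVertices a s ↔ p.1 ∈ s ∧ p.2 < a p.1 := by
  obtain ⟨i, j⟩ := p
  simp [groupVertices, and_comm]

lemma mk_mem_groupVertices {a : ℕ → ℕ} {s : Finset ℕ} {i j : ℕ} (hi : i ∈ s) (hj : j < a i) :
    (i, j) ∈ groupVertices a s :=
  mem_groupVertices.2 ⟨hi, hj⟩

lemma groupVertices_mono {a : ℕ → ℕ} {s t : Finset ℕ} (h : s ⊆ t) :
    groupVertices a s ⊆ groupVertices a t :=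
  biUnion_subset_biUnion_of_subset_left _ h

lemma card_groupVertices (a : ℕ → ℕ) (s : Finset ℕ) : #(groupVertices a s) = ∑ i ∈ s, a i := by
  rw [groupVertices, card_biUnion]
  · simp
  · intro i _ i' _ hii'
    simp only [Function.onFun, disjoint_left, mem_product, mem_singleton]
    grind

lemma virtualVertices_eq {n K B : ℕ} {a : ℕ → ℕ} (ha : ∀ i ∈ Icc 1 n, 1 ≤ a i) :
    virtualVertices n K B a =
      {(0, 0)} ∪ ↑(groupVertices a (Icc 1 n)) ∪ ↑(dummyVertices n K B) := by
  ext ⟨i, j⟩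
  simp only [virtualVertices, dummyVertices, Set.mem_union, Set.mem_ofPred_eq, mem_coe,
    mem_groupVertices, mem_product, mem_Icc, mem_singleton]
  constructor <;> rintro ((h | h) | h) <;> simp_all <;> have := ha i <;> omega

lemma physicalVertices_eq (K B : ℕ) :
    physicalVertices K B = {(0, 0)} ∪ ↑(firstLevel K B) ∪ ↑(binLeaves K B) := by
  ext ⟨k, b⟩
  simp [physicalVertices, firstLevel, binLeaves]
  omega

lemma mem_physicalVertices {K B : ℕ} {q : ℕ × ℕ} :
    q ∈ physicalVertices K B ↔ q = (0, 0) ∨ q ∈ firstLevel K B ∨ q ∈ binLeaves K B := by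
  simp [physicalVertices_eq, or_assoc]

lemma uniformTwoStarDist_root_left {k : ℕ} (hk : k ≠ 0) : uniformTwoStarDist (0, 0) (k, 0) = 1 := by
  simp [uniformTwoStarDist, hk, Ne.symm hk]

lemma uniformTwoStarDist_of_mem_binLeaves {K B : ℕ} {u v : ℕ × ℕ} (hu : u ∈ binLeaves K B)
    (hv : v ∈ binLeaves K B) (huv : u ≠ v) :
    uniformTwoStarDist u v = if u.1 = v.1 then 2 else 4 := by
  obtain ⟨k, b⟩ := u
  obtain ⟨k', b'⟩ := v
  simp only [ne_eq, Prod.mk.injEq] at huv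
  simp only [binLeaves, mem_product, mem_Icc] at hu hv
  simp only [uniformTwoStarDist, Prod.mk.injEq]
  split_ifs <;> omega

lemma uniformTwoStarDist_pos {K B : ℕ} {u v : ℕ × ℕ} (hu : u ∈ physicalVertices K B)
    (hv : v ∈ physicalVertices K B) (huv : u ≠ v) : 0 < uniformTwoStarDist u v := by
  simp only [mem_physicalVertices, firstLevel, binLeaves, mem_product, mem_Icc,
    mem_singleton] at hu hv
  unfold uniformTwoStarDist
  split_ifs <;> grind

lemma mem_firstLevel_of_uniformTwoStarDist_root {K B : ℕ} {q : ℕ × ℕ}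
    (hq : q ∈ physicalVertices K B) (h : uniformTwoStarDist (0, 0) q = 1) : q ∈ firstLevel K B := by
  simp only [mem_physicalVertices, firstLevel, binLeaves, mem_product, mem_Icc,
    mem_singleton] at hq ⊢
  unfold uniformTwoStarDist at h
  split_ifs at h <;> grind

lemma exists_card_le_of_uniformTwoStarDist_eq_one {K B : ℕ} {u : ℕ × ℕ}
    (hu : u ∈ physicalVertices K B) (hu₀ : u ≠ (0, 0)) :
    ∃ N : Finset (ℕ × ℕ), #N ≤ B + 1 ∧
      ∀ q ∈ physicalVertices K B, uniformTwoStarDist u q = 1 → q ∈ N := by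
  rcases mem_physicalVertices.1 hu with rfl | hu | hu
  · exact absurd rfl hu₀
  · refine ⟨insert (0, 0) ({u.1} ×ˢ Icc 1 B), (card_insert_le _ _).trans (by simp), ?_⟩
    intro q hq h
    simp only [mem_physicalVertices, firstLevel, binLeaves, mem_product, mem_Icc,
      mem_singleton] at hu hq
    simp only [mem_insert, mem_product, mem_singleton, mem_Icc]
    unfold uniformTwoStarDist at h
    split_ifs at h <;> grind
  · refine ⟨{(u.1, 0)}, by simp, fun q hq h ↦ ?_⟩
    simp only [mem_physicalVertices, firstLevel, binLeaves, mem_product, mem_Icc,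
      mem_singleton] at hu hq
    unfold uniformTwoStarDist at h
    split_ifs at h <;> grind

lemma dummyCost_eq_of_uniformTwoStarDist_eq_one {n K B : ℕ} {f : ℕ × ℕ → ℕ × ℕ}
    (hd : ∀ l ∈ Icc 1 (K + B), uniformTwoStarDist (f (0, 0)) (f (n + l, 0)) = 1) :
    dummyCost n K B f = (K + B) * (2 * B * K) := by
  rw [dummyCost, sum_congr rfl fun l hl ↦ by rw [hd l hl, mul_one], sum_const, Nat.card_Icc,
    smul_eq_mul, Nat.add_sub_cancel]

section EmbeddingToPacking

variable {n K B : ℕ} {a : ℕ → ℕ} {f : ℕ × ℕ → ℕ × ℕ}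

lemma root_mem_virtualVertices : ((0 : ℕ), (0 : ℕ)) ∈ virtualVertices n K B a := by
  simp [virtualVertices]

lemma dummy_mem_virtualVertices {l : ℕ} (hl : l ∈ Icc 1 (K + B)) :
    (n + l, 0) ∈ virtualVertices n K B a := by
  simp only [mem_Icc] at hl
  simp [virtualVertices]
  omega

lemma mem_virtualVertices_of_mem_groupVertices (ha : ∀ i ∈ Icc 1 n, 1 ≤ a i) {p : ℕ × ℕ}
    (hp : p ∈ groupVertices a (Icc 1 n)) : p ∈ virtualVertices n K B a := by
  rw [virtualVertices_eq ha]
  exact Or.inl (Or.inr hp)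

lemma injOn_dummies (hf : Set.InjOn f (virtualVertices n K B a)) :
    Set.InjOn (fun l ↦ f (n + l, 0)) (Icc 1 (K + B) : Set ℕ) := fun l hl l' hl' h ↦ by
  simpa using hf (dummy_mem_virtualVertices hl) (dummy_mem_virtualVertices hl') h

lemma uniformTwoStarDist_root_dummy_eq_one (ha : ∀ i ∈ Icc 1 n, 1 ≤ a i)
    (hsum : ∑ i ∈ Icc 1 n, a i = B * K) (hn : (Icc 1 n).Nonempty)
    (hf : Set.BijOn f (virtualVertices n K B a) (physicalVertices K B))
    (hcost : dummyCost n K B f + groupCost n a f ≤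
      (K + B) * (2 * B * K) + 2 * ∑ i ∈ Icc 1 n, (a i - 1)) :
    ∀ l ∈ Icc 1 (K + B), uniformTwoStarDist (f (0, 0)) (f (n + l, 0)) = 1 := by
  have hpos : ∀ l ∈ Icc 1 (K + B), 1 ≤ uniformTwoStarDist (f (0, 0)) (f (n + l, 0)) :=
    fun l hl ↦ uniformTwoStarDist_pos (hf.mapsTo root_mem_virtualVertices)
      (hf.mapsTo (dummy_mem_virtualVertices hl)) fun h ↦ by
        have := hf.injOn root_mem_virtualVertices (dummy_mem_virtualVertices hl) h
        simp only [Prod.mk.injEq, mem_Icc] at this hl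
        omega
  have hslack : 2 * ∑ i ∈ Icc 1 n, (a i - 1) < 2 * B * K := by
    have : ∑ i ∈ Icc 1 n, (a i - 1) < ∑ i ∈ Icc 1 n, a i :=
      sum_lt_sum_of_nonempty hn fun i hi ↦ by have := ha i hi; omega
    rw [hsum] at this
    linarith
  have hlt : 2 * B * K * ∑ l ∈ Icc 1 (K + B), uniformTwoStarDist (f (0, 0)) (f (n + l, 0)) <
      2 * B * K * (K + B + 1) := by
    rw [mul_sum]
    change dummyCost n K B f < _
    linarith
  have hle : ∑ l ∈ Icc 1 (K + B), uniformTwoStarDist (f (0, 0)) (f (n + l, 0)) ≤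
      ∑ l ∈ Icc 1 (K + B), 1 := by
    have := Nat.lt_of_mul_lt_mul_left hlt
    simp only [sum_const, Nat.card_Icc, smul_eq_mul, mul_one]
    omega
  exact fun l hl ↦ (Finset.eq_of_forall_le_of_sum_le hpos hle l hl).symm

lemma image_root_eq_root (hK : 2 ≤ K)
    (hf : Set.BijOn f (virtualVertices n K B a) (physicalVertices K B))
    (hd : ∀ l ∈ Icc 1 (K + B), uniformTwoStarDist (f (0, 0)) (f (n + l, 0)) = 1) :
    f (0, 0) = (0, 0) := by
  by_contra hne
  obtain ⟨N, hN, hmem⟩ :=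
    exists_card_le_of_uniformTwoStarDist_eq_one (hf.mapsTo root_mem_virtualVertices) hne
  have := card_le_card_of_injOn (fun l ↦ f (n + l, 0))
    (fun l hl ↦ hmem _ (hf.mapsTo (dummy_mem_virtualVertices hl)) (hd l hl))
    (injOn_dummies hf.injOn)
  simp only [Nat.card_Icc] at this
  omega

lemma image_dummies_eq_firstLevel
    (hf : Set.BijOn f (virtualVertices n K B a) (physicalVertices K B))
    (hroot : f (0, 0) = (0, 0))
    (hd : ∀ l ∈ Icc 1 (K + B), uniformTwoStarDist (f (0, 0)) (f (n + l, 0)) = 1) :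
    (Icc 1 (K + B)).image (fun l ↦ f (n + l, 0)) = firstLevel K B := by
  refine eq_of_subset_of_card_le (fun q hq ↦ ?_) ?_
  · obtain ⟨l, hl, rfl⟩ := mem_image.1 hq
    exact mem_firstLevel_of_uniformTwoStarDist_root (hf.mapsTo (dummy_mem_virtualVertices hl))
      (hroot ▸ hd l hl)
  · rw [card_image_of_injOn (injOn_dummies hf.injOn)]
    simp [firstLevel]

lemma mem_binLeaves_of_mem_groupVertices (ha : ∀ i ∈ Icc 1 n, 1 ≤ a i)
    (hf : Set.BijOn f (virtualVertices n K B a) (physicalVertices K B))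
    (hroot : f (0, 0) = (0, 0))
    (hcover : (Icc 1 (K + B)).image (fun l ↦ f (n + l, 0)) = firstLevel K B) {p : ℕ × ℕ}
    (hp : p ∈ groupVertices a (Icc 1 n)) : f p ∈ binLeaves K B := by
  have hpV := mem_virtualVertices_of_mem_groupVertices (K := K) (B := B) ha hp
  have hp₁ : 1 ≤ p.1 ∧ p.1 ≤ n := mem_Icc.1 (mem_groupVertices.1 hp).1
  rcases mem_physicalVertices.1 (hf.mapsTo hpV) with h | h | h
  · exfalso
    have := congrArg Prod.fst (hf.injOn hpV root_mem_virtualVertices (h.trans hroot.symm))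
    dsimp only at this
    omega
  · exfalso
    obtain ⟨l, hl, hfl⟩ := mem_image.1 (hcover ▸ h)
    have := congrArg Prod.fst (hf.injOn (dummy_mem_virtualVertices hl) hpV hfl)
    simp only [mem_Icc] at hl
    dsimp only at this
    omega
  · exact h

lemma fst_eq_of_groupCost_le (ha : ∀ i ∈ Icc 1 n, 1 ≤ a i)
    (hf : Set.InjOn f (virtualVertices n K B a))
    (hleaf : ∀ p ∈ groupVertices a (Icc 1 n), f p ∈ binLeaves K B)
    (hcost : groupCost n a f ≤ 2 * ∑ i ∈ Icc 1 n, (a i - 1)) :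
    ∀ p ∈ groupVertices a (Icc 1 n), (f p).1 = (f (p.1, 0)).1 := by
  have hdist : ∀ i ∈ Icc 1 n, ∀ j ∈ Icc 1 (a i - 1), uniformTwoStarDist (f (i, 0)) (f (i, j)) =
      if (f (i, 0)).1 = (f (i, j)).1 then 2 else 4 := by
    intro i hi j hj
    have := ha i hi
    simp only [mem_Icc] at hj
    have h₀ := mk_mem_groupVertices (a := a) hi (show 0 < a i by omega)
    have hj' := mk_mem_groupVertices (a := a) hi (show j < a i by omega)
    refine uniformTwoStarDist_of_mem_binLeaves (hleaf _ h₀) (hleaf _ hj') fun h ↦ ?_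
    have := hf (mem_virtualVertices_of_mem_groupVertices ha h₀)
      (mem_virtualVertices_of_mem_groupVertices ha hj') h
    simp only [Prod.mk.injEq] at this
    omega
  have hle : ∀ i ∈ Icc 1 n, ∀ j ∈ Icc 1 (a i - 1), 2 ≤ uniformTwoStarDist (f (i, 0)) (f (i, j)) :=
    fun i hi j hj ↦ by rw [hdist i hi j hj]; split_ifs <;> norm_num
  have hinner : ∀ i ∈ Icc 1 n,
      ∑ j ∈ Icc 1 (a i - 1), 2 ≤ ∑ j ∈ Icc 1 (a i - 1), uniformTwoStarDist (f (i, 0)) (f (i, j)) :=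
    fun i hi ↦ sum_le_sum (hle i hi)
  have hsums := Finset.eq_of_forall_le_of_sum_le hinner <| by
    simpa [groupCost, mul_sum, mul_comm] using hcost
  rintro ⟨i, j⟩ hp
  obtain ⟨hi, hj⟩ := mem_groupVertices.1 hp
  dsimp only at hi hj
  rcases Nat.eq_zero_or_pos j with rfl | hj₀
  · rfl
  have hj' : j ∈ Icc 1 (a i - 1) := mem_Icc.2 ⟨hj₀, by omega⟩
  have h2 := Finset.eq_of_forall_le_of_sum_le (hle i hi) (hsums i hi).ge j hj'
  rw [hdist i hi j hj'] at h2
  split_ifs at h2 with h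
  · exact h.symm
  · omega

lemma isBinPacking_of_fst_eq (ha : ∀ i ∈ Icc 1 n, 1 ≤ a i)
    (hf : Set.InjOn f (virtualVertices n K B a))
    (hleaf : ∀ p ∈ groupVertices a (Icc 1 n), f p ∈ binLeaves K B)
    (hsame : ∀ p ∈ groupVertices a (Icc 1 n), (f p).1 = (f (p.1, 0)).1) :
    IsBinPacking n B K a fun i ↦ (f (i, 0)).1 := by
  refine ⟨fun i hi ↦ ?_, fun k _ ↦ ?_⟩
  · have := hleaf (i, 0) (mk_mem_groupVertices hi (ha i hi))
    simp only [binLeaves, mem_product] at this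
    exact this.1
  · set s := groupVertices a ((Icc 1 n).filter fun i ↦ (f (i, 0)).1 = k)
    have hsub : s ⊆ groupVertices a (Icc 1 n) := groupVertices_mono (filter_subset _ _)
    have hmaps : Set.MapsTo f s (({k} ×ˢ Icc 1 B : Finset (ℕ × ℕ)) : Set (ℕ × ℕ)) := fun p hp ↦ by
      rw [mem_coe] at hp ⊢
      have hleafp := hleaf p (hsub hp)
      obtain ⟨-, hk⟩ := mem_filter.1 (mem_groupVertices.1 hp).1
      simp only [binLeaves, mem_product, mem_Icc] at hleafp
      simp only [mem_product, mem_singleton, mem_Icc]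
      exact ⟨(hsame p (hsub hp)).trans hk, hleafp.2⟩
    simpa [s, card_groupVertices] using card_le_card_of_injOn f hmaps
      (hf.mono fun p hp ↦ mem_virtualVertices_of_mem_groupVertices ha (hsub hp))

theorem exists_isBinPacking_of_embedding (hK : 2 ≤ K) (ha : ∀ i ∈ Icc 1 n, 1 ≤ a i)
    (hsum : ∑ i ∈ Icc 1 n, a i = B * K)
    (hf : Set.BijOn f (virtualVertices n K B a) (physicalVertices K B))
    (hcost : dummyCost n K B f + groupCost n a f ≤
      (K + B) * (2 * B * K) + 2 * ∑ i ∈ Icc 1 n, (a i - 1)) :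
    ∃ g, IsBinPacking n B K a g := by
  rcases (Icc 1 n).eq_empty_or_nonempty with hn | hn
  · exact ⟨fun _ ↦ 1, by simp [IsBinPacking, hn]⟩
  have hd := uniformTwoStarDist_root_dummy_eq_one ha hsum hn hf hcost
  have hroot := image_root_eq_root hK hf hd
  have hleaf := fun p ↦ mem_binLeaves_of_mem_groupVertices (p := p) ha hf hroot
    (image_dummies_eq_firstLevel hf hroot hd)
  have hdummy := dummyCost_eq_of_uniformTwoStarDist_eq_one hd
  have hsame := fst_eq_of_groupCost_le ha hf.injOn hleaf (by omega)
  exact ⟨_, isBinPacking_of_fst_eq ha hf.injOn hleaf hsame⟩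

end EmbeddingToPacking

section PackingToEmbedding

variable {n K B : ℕ} {a g : ℕ → ℕ}

lemma IsBinPacking.sum_eq (hg : IsBinPacking n B K a g) (hsum : ∑ i ∈ Icc 1 n, a i = B * K) :
    ∀ k ∈ Icc 1 K, ∑ i ∈ (Icc 1 n).filter (fun i => g i = k), a i = B :=
  Finset.eq_of_forall_le_of_sum_le hg.2 <| by
    rw [sum_fiberwise_of_maps_to hg.1, hsum]
    simp [mul_comm]

def binOffset (n : ℕ) (a g : ℕ → ℕ) (i : ℕ) : ℕ :=
  ∑ x ∈ ((Icc 1 n).filter (fun x => g x = g i)).filter (· < i), a x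

/-- Element `i` fills the leaves `binOffset + 1, …, binOffset + a i` of bin `g i`, right after
the elements of the same bin with smaller index; dummy `n + l` goes to the first-level vertex
`l`. -/
def packingEmbedding (n : ℕ) (a g : ℕ → ℕ) (p : ℕ × ℕ) : ℕ × ℕ :=
  if p.1 = 0 then (0, 0)
  else if p.1 ≤ n then (g p.1, binOffset n a g p.1 + p.2 + 1)
  else (p.1 - n, 0)

lemma binOffset_add_le_binOffset {i i' : ℕ} (hi : i ∈ Icc 1 n) (hg : g i = g i') (hii' : i < i') :
    binOffset n a g i + a i ≤ binOffset n a g i' := by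
  unfold binOffset
  rw [← hg]
  exact sum_filter_lt_add_le_sum_filter_lt a (mem_filter.2 ⟨hi, rfl⟩) hii'

lemma IsBinPacking.binOffset_add_le (hg : IsBinPacking n B K a g) {i : ℕ} (hi : i ∈ Icc 1 n) :
    binOffset n a g i + a i ≤ B :=
  calc binOffset n a g i + a i ≤ ∑ x ∈ (Icc 1 n).filter (fun x => g x = g i), a x :=
        sum_filter_lt_add_le_sum a (mem_filter.2 ⟨hi, rfl⟩)
    _ ≤ B := hg.2 _ (hg.1 i hi)

lemma packingEmbedding_root : packingEmbedding n a g (0, 0) = (0, 0) := by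
  simp [packingEmbedding]

lemma packingEmbedding_of_mem_groupVertices {p : ℕ × ℕ} (hp : p ∈ groupVertices a (Icc 1 n)) :
    packingEmbedding n a g p = (g p.1, binOffset n a g p.1 + p.2 + 1) := by
  have := mem_Icc.1 (mem_groupVertices.1 hp).1
  rw [packingEmbedding, if_neg (by omega), if_pos this.2]

lemma packingEmbedding_of_mem_dummyVertices {p : ℕ × ℕ} (hp : p ∈ dummyVertices n K B) :
    packingEmbedding n a g p = (p.1 - n, 0) := by
  simp only [dummyVertices, mem_product, mem_Icc, mem_singleton] at hp
  rw [packingEmbedding, if_neg (by omega), if_neg (by omega)]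

lemma bijOn_packingEmbedding_dummyVertices :
    Set.BijOn (packingEmbedding n a g) (dummyVertices n K B) (firstLevel K B) := by
  refine ⟨fun p hp ↦ ?_, fun p hp p' hp' h ↦ ?_, fun q hq ↦ ?_⟩
  · rw [mem_coe] at hp ⊢
    rw [packingEmbedding_of_mem_dummyVertices hp]
    simp only [dummyVertices, firstLevel, mem_product, mem_Icc, mem_singleton, and_true] at hp ⊢
    omega
  · rw [mem_coe] at hp hp'
    rw [packingEmbedding_of_mem_dummyVertices hp, packingEmbedding_of_mem_dummyVertices hp'] at h
    simp only [dummyVertices, mem_product, mem_Icc, mem_singleton] at hp hp'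
    simp only [Prod.mk.injEq] at h
    exact Prod.ext (by omega) (hp.2.trans hp'.2.symm)
  · simp only [firstLevel, coe_product, Set.mem_prod, coe_Icc, Set.mem_Icc, coe_singleton,
      Set.mem_singleton_iff] at hq
    have hp : (n + q.1, 0) ∈ dummyVertices n K B := by
      simp only [dummyVertices, mem_product, mem_Icc, mem_singleton, and_true]
      omega
    refine ⟨_, hp, ?_⟩
    rw [packingEmbedding_of_mem_dummyVertices hp]
    exact Prod.ext (by simp) hq.2.symm

lemma IsBinPacking.mapsTo_packingEmbedding (hg : IsBinPacking n B K a g) :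
    Set.MapsTo (packingEmbedding n a g) (groupVertices a (Icc 1 n)) (binLeaves K B) := by
  intro p hp
  rw [mem_coe] at hp ⊢
  rw [packingEmbedding_of_mem_groupVertices hp]
  have hi := (mem_groupVertices.1 hp).1
  have := hg.binOffset_add_le hi
  have := mem_groupVertices.1 hp
  simp only [binLeaves, mem_product, mem_Icc]
  exact ⟨mem_Icc.1 (hg.1 _ hi), by omega, by omega⟩

lemma packingEmbedding_ne_of_lt {p p' : ℕ × ℕ} (hp : p ∈ groupVertices a (Icc 1 n))
    (hp' : p' ∈ groupVertices a (Icc 1 n)) (hlt : p.1 < p'.1) :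
    packingEmbedding n a g p ≠ packingEmbedding n a g p' := by
  rw [packingEmbedding_of_mem_groupVertices hp, packingEmbedding_of_mem_groupVertices hp']
  intro h
  simp only [Prod.mk.injEq] at h
  have := binOffset_add_le_binOffset (a := a) (mem_groupVertices.1 hp).1 h.1 hlt
  have := (mem_groupVertices.1 hp).2
  omega

lemma injOn_packingEmbedding_groupVertices :
    Set.InjOn (packingEmbedding n a g) (groupVertices a (Icc 1 n)) := by
  intro p hp p' hp' h
  rw [mem_coe] at hp hp'
  rcases lt_trichotomy p.1 p'.1 with hlt | heq | hlt
  · exact absurd h (packingEmbedding_ne_of_lt hp hp' hlt)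
  · rw [packingEmbedding_of_mem_groupVertices hp, packingEmbedding_of_mem_groupVertices hp',
      heq] at h
    simp only [Prod.mk.injEq] at h
    exact Prod.ext heq (by omega)
  · exact absurd h.symm (packingEmbedding_ne_of_lt hp' hp hlt)

/-- Surjectivity is a count: the elements of bin `k` have `B` vertices in total and are mapped
injectively into the `B` leaves of that bin. -/
lemma IsBinPacking.bijOn_packingEmbedding_groupVertices (hg : IsBinPacking n B K a g)
    (hsum : ∑ i ∈ Icc 1 n, a i = B * K) :
    Set.BijOn (packingEmbedding n a g) (groupVertices a (Icc 1 n)) (binLeaves K B) := by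
  refine ⟨hg.mapsTo_packingEmbedding, injOn_packingEmbedding_groupVertices, fun q hq ↦ ?_⟩
  obtain ⟨hk, hb⟩ := mem_product.1 (mem_coe.1 hq)
  set s := groupVertices a ((Icc 1 n).filter fun i ↦ g i = q.1)
  have hsub : s ⊆ groupVertices a (Icc 1 n) := groupVertices_mono (filter_subset _ _)
  have himage : s.image (packingEmbedding n a g) = {q.1} ×ˢ Icc 1 B := by
    refine eq_of_subset_of_card_le (fun r hr ↦ ?_) ?_
    · obtain ⟨p, hp, rfl⟩ := mem_image.1 hr
      have hleaf := mem_product.1 (hg.mapsTo_packingEmbedding (mem_coe.2 (hsub hp)))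
      rw [packingEmbedding_of_mem_groupVertices (hsub hp)] at hleaf ⊢
      exact mem_product.2 ⟨mem_singleton.2 (mem_filter.1 (mem_groupVertices.1 hp).1).2, hleaf.2⟩
    · rw [card_image_of_injOn (injOn_packingEmbedding_groupVertices.mono (coe_subset.2 hsub)),
        card_groupVertices, hg.sum_eq hsum _ hk]
      simp
  obtain ⟨p, hp, hpq⟩ := mem_image.1 (himage ▸ mem_product.2 ⟨mem_singleton_self q.1, hb⟩)
  exact ⟨p, hsub hp, hpq⟩

lemma dummyCost_packingEmbedding :
    dummyCost n K B (packingEmbedding n a g) = (K + B) * (2 * B * K) := by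
  refine dummyCost_eq_of_uniformTwoStarDist_eq_one fun l hl ↦ ?_
  have hl := mem_Icc.1 hl
  have hmem : (n + l, 0) ∈ dummyVertices n K B := by
    simp only [dummyVertices, mem_product, mem_Icc, mem_singleton, and_true]
    omega
  rw [packingEmbedding_root, packingEmbedding_of_mem_dummyVertices hmem, Nat.add_sub_cancel_left,
    uniformTwoStarDist_root_left (by omega)]

lemma IsBinPacking.groupCost_packingEmbedding (ha : ∀ i ∈ Icc 1 n, 1 ≤ a i)
    (hg : IsBinPacking n B K a g) :
    groupCost n a (packingEmbedding n a g) = 2 * ∑ i ∈ Icc 1 n, (a i - 1) := by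
  rw [groupCost, mul_sum]
  refine sum_congr rfl fun i hi ↦ ?_
  have hd : ∀ j ∈ Icc 1 (a i - 1), uniformTwoStarDist (packingEmbedding n a g (i, 0))
      (packingEmbedding n a g (i, j)) = 2 := fun j hj ↦ by
    have := ha i hi
    have hj := mem_Icc.1 hj
    have h₀ := mk_mem_groupVertices (a := a) hi (show 0 < a i by omega)
    have hj' := mk_mem_groupVertices (a := a) hi (show j < a i by omega)
    have hne : packingEmbedding n a g (i, 0) ≠ packingEmbedding n a g (i, j) := fun h ↦
      absurd (congrArg Prod.snd (injOn_packingEmbedding_groupVertices h₀ hj' h)) (by simp; omega)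
    rw [uniformTwoStarDist_of_mem_binLeaves (hg.mapsTo_packingEmbedding h₀)
      (hg.mapsTo_packingEmbedding hj') hne, packingEmbedding_of_mem_groupVertices h₀,
      packingEmbedding_of_mem_groupVertices hj', if_pos rfl]
  rw [sum_congr rfl hd, sum_const, Nat.card_Icc, smul_eq_mul, Nat.add_sub_cancel, mul_comm]

theorem IsBinPacking.packingEmbedding_bijOn_and_cost_le (ha : ∀ i ∈ Icc 1 n, 1 ≤ a i)
    (hsum : ∑ i ∈ Icc 1 n, a i = B * K) (hg : IsBinPacking n B K a g) :
    Set.BijOn (packingEmbedding n a g) (virtualVertices n K B a) (physicalVertices K B) ∧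
      dummyCost n K B (packingEmbedding n a g) + groupCost n a (packingEmbedding n a g) ≤
        (K + B) * (2 * B * K) + 2 * ∑ i ∈ Icc 1 n, (a i - 1) := by
  refine ⟨?_, by rw [dummyCost_packingEmbedding, hg.groupCost_packingEmbedding ha]⟩
  rw [virtualVertices_eq ha, physicalVertices_eq,
    Set.union_right_comm _ (firstLevel K B : Set (ℕ × ℕ))]
  refine .union_of_disjoint (.union_of_disjoint (Set.bijOn_singleton.2 packingEmbedding_root)
    (hg.bijOn_packingEmbedding_groupVertices hsum) ?_) bijOn_packingEmbedding_dummyVertices ?_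
  · simp [binLeaves]
  · simp only [Set.disjoint_left, binLeaves, firstLevel, Set.mem_union, Set.mem_singleton_iff,
      mem_coe, mem_product, mem_Icc, mem_singleton]
    rintro ⟨k, b⟩ (h | h) ⟨_, rfl⟩ <;> simp_all

end PackingToEmbedding

theorem binPacking_iff_twoStar_on_uniformTwoStar_wVNE_general (n B K : ℕ) (hK : 2 ≤ K) (a : ℕ → ℕ)
    (ha : ∀ i ∈ Finset.Icc 1 n, 1 ≤ a i)
    (hsum : ∑ i ∈ Finset.Icc 1 n, a i = B * K) :
    (∃ g : ℕ → ℕ, (∀ i ∈ Finset.Icc 1 n, g i ∈ Finset.Icc 1 K) ∧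
        ∀ k ∈ Finset.Icc 1 K,
          ∑ i ∈ (Finset.Icc 1 n).filter (fun i => g i = k), a i ≤ B) ↔
    (∃ f : ℕ × ℕ → ℕ × ℕ,
      Set.BijOn f
        ({((0 : ℕ), (0 : ℕ))} ∪
          {p : ℕ × ℕ | 1 ≤ p.1 ∧ p.1 ≤ n ∧ p.2 ≤ a p.1 - 1} ∪
          {p : ℕ × ℕ | n + 1 ≤ p.1 ∧ p.1 ≤ n + K + B ∧ p.2 = 0})
        ({((0 : ℕ), (0 : ℕ))} ∪
          {p : ℕ × ℕ | 1 ≤ p.1 ∧ p.1 ≤ K + B ∧ p.2 = 0} ∪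
          {p : ℕ × ℕ | 1 ≤ p.1 ∧ p.1 ≤ K ∧ 1 ≤ p.2 ∧ p.2 ≤ B}) ∧
      (∑ l ∈ Finset.Icc 1 (K + B),
          2 * B * K * uniformTwoStarDist (f (0, 0)) (f (n + l, 0))) +
      (∑ i ∈ Finset.Icc 1 n, ∑ j ∈ Finset.Icc 1 (a i - 1),
          uniformTwoStarDist (f (i, 0)) (f (i, j)))
        ≤ (K + B) * (2 * B * K) + 2 * ∑ i ∈ Finset.Icc 1 n, (a i - 1)) := by
  constructor
  · rintro ⟨g, hg⟩
    exact ⟨_, IsBinPacking.packingEmbedding_bijOn_and_cost_le ha hsum hg⟩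
  · rintro ⟨f, hf, hcost⟩
    exact exists_isBinPacking_of_embedding hK ha hsum hf hcost

/-- Correctness of the reduction of bin packing to wVNE of a 2-star
virtual network on a **uniform** 2-star physical network.

Virtual network: root `r = (0,0)`; element groups: for `i ∈ 1..n` a star with center
`(i,0)` and leaves `(i,j)`, `j ∈ 1..aᵢ − 1`, internal edges of demand `1`, joined to
`r` by a demand-0 edge; and `K + B` dummy leaves `(n+ℓ, 0)` attached to `r` by edges
of demand `x = 2·B·K`.

Physical network: root `R = (0,0)`; `K` bin roots `(k,0)`, `k ∈ 1..K`, each with `B`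
leaf children `(k,b)`, `b ∈ 1..B`; and `B` extra leaves `(K+ℓ, 0)`, `ℓ ∈ 1..B`,
adjacent to `R`; every edge of cost `1`.

With `θ = (K + B)·x + 2·∑ (aᵢ − 1)`, bin packing is solvable iff there is an
embedding of cost at most `θ`. -/
theorem binPacking_iff_twoStar_on_uniformTwoStar_wVNE (n B K : ℕ) (hn : 2 ≤ n)
    (hB : 1 ≤ B) (hK : 2 ≤ K) (a : ℕ → ℕ) (ha : ∀ i ∈ Finset.Icc 1 n, 1 ≤ a i)
    (hsum : ∑ i ∈ Finset.Icc 1 n, a i = B * K) :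
    (∃ g : ℕ → ℕ, (∀ i ∈ Finset.Icc 1 n, g i ∈ Finset.Icc 1 K) ∧
        ∀ k ∈ Finset.Icc 1 K,
          ∑ i ∈ (Finset.Icc 1 n).filter (fun i => g i = k), a i ≤ B) ↔
    (∃ f : ℕ × ℕ → ℕ × ℕ,
      Set.BijOn f
        ({((0 : ℕ), (0 : ℕ))} ∪
          {p : ℕ × ℕ | 1 ≤ p.1 ∧ p.1 ≤ n ∧ p.2 ≤ a p.1 - 1} ∪
          {p : ℕ × ℕ | n + 1 ≤ p.1 ∧ p.1 ≤ n + K + B ∧ p.2 = 0})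
        ({((0 : ℕ), (0 : ℕ))} ∪
          {p : ℕ × ℕ | 1 ≤ p.1 ∧ p.1 ≤ K + B ∧ p.2 = 0} ∪
          {p : ℕ × ℕ | 1 ≤ p.1 ∧ p.1 ≤ K ∧ 1 ≤ p.2 ∧ p.2 ≤ B}) ∧
      (∑ l ∈ Finset.Icc 1 (K + B),
          2 * B * K * uniformTwoStarDist (f (0, 0)) (f (n + l, 0))) +
      (∑ i ∈ Finset.Icc 1 n, ∑ j ∈ Finset.Icc 1 (a i - 1),
          uniformTwoStarDist (f (i, 0)) (f (i, j)))
        ≤ (K + B) * (2 * B * K) + 2 * ∑ i ∈ Finset.Icc 1 n, (a i - 1)) :=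
  binPacking_iff_twoStar_on_uniformTwoStar_wVNE_general n B K hK a ha hsum
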